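/- arXiv:2311.15670 — 4 statements merged into one kernel-verified Lean document; each statement's English description precedes it below -/
import Mathlib

section
/- If P1 ≈_b P2, then P1∖L ≈_b P2∖L for every set L ⊆ A of observable actions (branching bisimilarity is a congruence with respect to the restriction operator). -/
/-! If `B` is a branching bisimulation, so is `{(p∖L, q∖L) | B p q}`: every move of `p∖L`
comes from a move of `p` with a label outside `L`, and the answer of `q` given by `B`
survives restriction, because its τ-prefix is never blocked. -/

namespace SecurityNI

/-- Process terms: `0`, action prefix (`none` = τ, `some a` = observable action),
choice, CSP-style parallel composition with synchronization set, restriction,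
hiding, and constants (whose defining equations are given by an environment). -/
inductive Proc (A : Type) (C : Type) : Type where
  | nil : Proc A C
  | pre : Option A → Proc A C → Proc A C
  | choice : Proc A C → Proc A C → Proc A C
  | par : Set A → Proc A C → Proc A C → Proc A C
  | restrict : Proc A C → Set A → Proc A C
  | hide : Proc A C → Set A → Proc A C
  | const : C → Proc A C

variable {A C : Type}

/-- A process term is guarded when every constant occurrence is in the scope
of an action prefix operator. -/
def Guarded : Proc A C → Prop
  | .nil => True
  | .pre _ _ => True
  | .choice p q => Guarded p ∧ Guarded q
  | .par _ p q => Guarded p ∧ Guarded q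
  | .restrict p _ => Guarded p
  | .hide p _ => Guarded p
  | .const _ => False

/-- Operational semantics, parameterized by the defining equations `env` of
the constants.  Labels are `Option A`, with `none` playing the role of τ. -/
inductive Trans (env : C → Proc A C) : Proc A C → Option A → Proc A C → Prop where
  | pre (a : Option A) (p : Proc A C) : Trans env (.pre a p) a p
  | choiceL {p q a p'} (h : Trans env p a p') : Trans env (.choice p q) a p'
  | choiceR {p q a q'} (h : Trans env q a q') : Trans env (.choice p q) a q'
  | parL {L p q a p'} (h : Trans env p a p') (hn : ∀ x, a = some x → x ∉ L) :
      Trans env (.par L p q) a (.par L p' q)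
  | parR {L p q a q'} (h : Trans env q a q') (hn : ∀ x, a = some x → x ∉ L) :
      Trans env (.par L p q) a (.par L p q')
  | sync {L p q x p' q'} (h1 : Trans env p (some x) p') (h2 : Trans env q (some x) q')
      (hx : x ∈ L) : Trans env (.par L p q) (some x) (.par L p' q')
  | res {p a p' L} (h : Trans env p a p') (hn : ∀ x, a = some x → x ∉ L) :
      Trans env (.restrict p L) a (.restrict p' L)
  | hideIn {p x p' L} (h : Trans env p (some x) p') (hx : x ∈ L) :
      Trans env (.hide p L) none (.hide p' L)
  | hideOut {p a p' L} (h : Trans env p a p') (hn : ∀ x, a = some x → x ∉ L) :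
      Trans env (.hide p L) a (.hide p' L)
  | const {c a p'} (h : Trans env (env c) a p') : Trans env (.const c) a p'

section LTS

variable {S : Type} (tr : S → Option A → S → Prop)

/-- Finitely many (possibly zero) τ-transitions. -/
def TauStar : S → S → Prop :=
  Relation.ReflTransGen (fun s s' => tr s none s')

/-- `B` is a branching bisimulation. -/
def IsBranchingBisim (B : S → S → Prop) : Prop :=
  Symmetric B ∧
    ∀ s1 s2, B s1 s2 → ∀ a s1', tr s1 a s1' →
      (a = none ∧ B s1' s2) ∨
      (∃ s2b s2', TauStar tr s2 s2b ∧ tr s2b a s2' ∧ B s1 s2b ∧ B s1' s2')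

/-- Branching bisimilarity `≈_b`. -/
def BrBisim (s1 s2 : S) : Prop :=
  ∃ B, IsBranchingBisim tr B ∧ B s1 s2

/-- `B` is a weak bisimulation. -/
def IsWeakBisim (B : S → S → Prop) : Prop :=
  Symmetric B ∧
    ∀ s1 s2, B s1 s2 →
      (∀ s1', tr s1 none s1' → ∃ s2', TauStar tr s2 s2' ∧ B s1' s2') ∧
      (∀ x s1', tr s1 (some x) s1' →
        ∃ t t' s2', TauStar tr s2 t ∧ tr t (some x) t' ∧ TauStar tr t' s2' ∧ B s1' s2')

/-- Weak bisimilarity `≈`. -/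
def WeakBisim (s1 s2 : S) : Prop :=
  ∃ B, IsWeakBisim tr B ∧ B s1 s2

/-- Reachability via finitely many transitions. -/
def Reach : S → S → Prop :=
  Relation.ReflTransGen (fun s s' => ∃ a, tr s a s')

end LTS

section Security

variable (env : C → Proc A C) (AH : Set A)

/-- `P ∈ BrSNNI` iff `P∖A_H ≈_b P/A_H`. -/
def BrSNNI (p : Proc A C) : Prop :=
  BrBisim (Trans env) (.restrict p AH) (.hide p AH)

/-- All processes reachable from `q` perform only actions in `AH`. -/
def HighOnly (q : Proc A C) : Prop :=
  ∀ q', Reach (Trans env) q q' → ∀ a q'', Trans env q' a q'' → ∃ h ∈ AH, a = some h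

/-- `P ∈ BrNDC` iff `P∖A_H ≈_b ((P ∥_L Q)/L)∖A_H` for every high-level `Q`
and every `L ⊆ A_H`. -/
def BrNDC (p : Proc A C) : Prop :=
  ∀ q, HighOnly env AH q → ∀ L, L ⊆ AH →
    BrBisim (Trans env) (.restrict p AH) (.restrict (.hide (.par L p q) L) AH)

/-- `P ∈ SBrSNNI` iff every reachable process is BrSNNI. -/
def SBrSNNI (p : Proc A C) : Prop :=
  ∀ p', Reach (Trans env) p p' → BrSNNI env AH p'

/-- `P ∈ P_BrNDC` iff every reachable process is BrNDC. -/
def PBrNDC (p : Proc A C) : Prop :=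
  ∀ p', Reach (Trans env) p p' → BrNDC env AH p'

/-- `P ∈ SBrNDC` iff for every reachable `P'` and every high transition
`P' --h→ P''`, `P'∖A_H ≈_b P''∖A_H`. -/
def SBrNDC (p : Proc A C) : Prop :=
  ∀ p' p'', Reach (Trans env) p p' → ∀ h ∈ AH, Trans env p' (some h) p'' →
    BrBisim (Trans env) (.restrict p' AH) (.restrict p'' AH)

/-- `P ∈ BSNNI` iff `P∖A_H ≈ P/A_H`. -/
def BSNNI (p : Proc A C) : Prop :=
  WeakBisim (Trans env) (.restrict p AH) (.hide p AH)

/-- `P ∈ BNDC` iff `P∖A_H ≈ ((P ∥_L Q)/L)∖A_H` for every high-level `Q`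
and every `L ⊆ A_H`. -/
def BNDC (p : Proc A C) : Prop :=
  ∀ q, HighOnly env AH q → ∀ L, L ⊆ AH →
    WeakBisim (Trans env) (.restrict p AH) (.restrict (.hide (.par L p q) L) AH)

/-- `P ∈ SBSNNI` iff every reachable process is BSNNI. -/
def SBSNNI (p : Proc A C) : Prop :=
  ∀ p', Reach (Trans env) p p' → BSNNI env AH p'

/-- `P ∈ P_BNDC` iff every reachable process is BNDC. -/
def PBNDC (p : Proc A C) : Prop :=
  ∀ p', Reach (Trans env) p p' → BNDC env AH p'

/-- `P ∈ SBNDC` iff for every reachable `P'` and every high transition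
`P' --h→ P''`, `P'∖A_H ≈ P''∖A_H`. -/
def SBNDC (p : Proc A C) : Prop :=
  ∀ p' p'', Reach (Trans env) p p' → ∀ h ∈ AH, Trans env p' (some h) p'' →
    WeakBisim (Trans env) (.restrict p' AH) (.restrict p'' AH)

/-- No high-level actions occur in `p`: no process reachable from `p`
can perform a high-level action. -/
def NoHigh (p : Proc A C) : Prop :=
  ∀ p', Reach (Trans env) p p' → ∀ h ∈ AH, ∀ p'', ¬ Trans env p' (some h) p''

end Security

section Restriction

variable {env : C → Proc A C} {L : Set A}

theorem trans_restrict_iff {p s : Proc A C} {a : Option A} :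
    Trans env (.restrict p L) a s ↔
      ∃ p', Trans env p a p' ∧ (∀ x, a = some x → x ∉ L) ∧ s = .restrict p' L := by
  constructor
  · intro h
    cases h with
    | res h hn => exact ⟨_, h, hn, rfl⟩
  · rintro ⟨p', h, hn, rfl⟩
    exact Trans.res h hn

theorem tauStar_restrict {p q : Proc A C} (h : TauStar (Trans env) p q) :
    TauStar (Trans env) (.restrict p L) (.restrict q L) :=
  h.lift (Proc.restrict · L) fun _ _ hτ => Trans.res hτ (by simp)

abbrev restrictRel (L : Set A) (B : Proc A C → Proc A C → Prop) :
    Proc A C → Proc A C → Prop :=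
  Relation.Map B (Proc.restrict · L) (Proc.restrict · L)

theorem IsBranchingBisim.restrictRel {B : Proc A C → Proc A C → Prop}
    (hB : IsBranchingBisim (Trans env) B) (L : Set A) :
    IsBranchingBisim (Trans env) (restrictRel L B) := by
  obtain ⟨hsymm, hstep⟩ := hB
  refine ⟨?_, ?_⟩
  · rintro _ _ ⟨p, q, hpq, rfl, rfl⟩
    exact ⟨q, p, hsymm hpq, rfl, rfl⟩
  · rintro _ _ ⟨p, q, hpq, rfl, rfl⟩ a _ htr
    obtain ⟨p', htrp, hn, rfl⟩ := trans_restrict_iff.mp htr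
    rcases hstep p q hpq a p' htrp with ⟨rfl, hpq'⟩ | ⟨qb, q', hτ, htrq, hpqb, hpq'⟩
    · exact Or.inl ⟨rfl, p', q, hpq', rfl, rfl⟩
    · exact Or.inr ⟨_, _, tauStar_restrict hτ, Trans.res htrq hn,
        ⟨p, qb, hpqb, rfl, rfl⟩, ⟨p', q', hpq', rfl, rfl⟩⟩

end Restriction

theorem brBisim_congr_restrict_general {A C : Type} (env : C → Proc A C)
    (P1 P2 : Proc A C)
    (h : BrBisim (Trans env) P1 P2) (L : Set A) :
    BrBisim (Trans env) (Proc.restrict P1 L) (Proc.restrict P2 L) := by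
  obtain ⟨B, hB, hP⟩ := h
  exact ⟨restrictRel L B, hB.restrictRel L, P1, P2, hP, rfl, rfl⟩

/-- branching bisimilarity is a congruence w.r.t. restriction. -/
theorem brBisim_congr_restrict {A C : Type} (env : C → Proc A C)
    (hguard : ∀ c, Guarded (env c)) (P1 P2 : Proc A C)
    (h : BrBisim (Trans env) P1 P2) (L : Set A) :
    BrBisim (Trans env) (Proc.restrict P1 L) (Proc.restrict P2 L) :=
  brBisim_congr_restrict_general env P1 P2 h L

end SecurityNI
end

section
/- If P1 ≈_b P2, then P1/L ≈_b P2/L for every set L ⊆ A of observable actions (branching bisimilarity is a congruence with respect to the hiding operator). -/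
namespace SecurityNI

variable {A C : Type}

/- Every transition of `p / L` is a transition of `p` relabelled by `hideLabel L`, which fixes τ;
so hiding preserves both clauses of the transfer property of a branching bisimulation. -/
noncomputable def hideLabel (L : Set A) : Option A → Option A
  | none => none
  | some x => open Classical in if x ∈ L then none else some x

theorem trans_hide_iff {env : C → Proc A C} {p s : Proc A C} {L : Set A} {a : Option A} :
    Trans env (.hide p L) a s ↔
      ∃ b p', Trans env p b p' ∧ hideLabel L b = a ∧ s = .hide p' L := by
  constructor
  · rintro (_ | _ | _ | _ | _ | _ | _ | ⟨h, hx⟩ | ⟨h, hn⟩ | _)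
    · exact ⟨_, _, h, by simp [hideLabel, hx], rfl⟩
    · refine ⟨_, _, h, ?_, rfl⟩
      rcases a with _ | x
      · rfl
      · simp [hideLabel, hn x rfl]
  · rintro ⟨b, p', h, rfl, rfl⟩
    rcases b with _ | x
    · exact .hideOut h (by simp [hideLabel])
    · by_cases hx : x ∈ L
      · simpa [hideLabel, hx] using Trans.hideIn h hx
      · simpa [hideLabel, hx] using Trans.hideOut h (by simpa using hx)

theorem TauStar.hide {env : C → Proc A C} {p q : Proc A C} (L : Set A)
    (h : TauStar (Trans env) p q) : TauStar (Trans env) (.hide p L) (.hide q L) :=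
  h.lift (Proc.hide · L) fun _ _ hstep => trans_hide_iff.2 ⟨none, _, hstep, rfl, rfl⟩

theorem IsBranchingBisim.map_hide {env : C → Proc A C} {B : Proc A C → Proc A C → Prop}
    (hB : IsBranchingBisim (Trans env) B) (L : Set A) :
    IsBranchingBisim (Trans env) (Relation.Map B (Proc.hide · L) (Proc.hide · L)) := by
  obtain ⟨hsymm, htransfer⟩ := hB
  refine ⟨?_, ?_⟩
  · rintro _ _ ⟨p, q, hpq, rfl, rfl⟩
    exact ⟨q, p, hsymm hpq, rfl, rfl⟩
  · rintro _ _ ⟨p, q, hpq, rfl, rfl⟩ a _ htrans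
    obtain ⟨b, p', hp, rfl, rfl⟩ := trans_hide_iff.1 htrans
    rcases htransfer p q hpq b p' hp with ⟨rfl, hp'q⟩ | ⟨qb, q', hqqb, hq, hpqb, hp'q'⟩
    · exact .inl ⟨rfl, p', q, hp'q, rfl, rfl⟩
    · exact .inr ⟨.hide qb L, .hide q' L, hqqb.hide L, trans_hide_iff.2 ⟨b, q', hq, rfl, rfl⟩,
        ⟨p, qb, hpqb, rfl, rfl⟩, ⟨p', q', hp'q', rfl, rfl⟩⟩

theorem brBisim_congr_hide_general {A C : Type} (env : C → Proc A C)
    (P1 P2 : Proc A C)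
    (h : BrBisim (Trans env) P1 P2) (L : Set A) :
    BrBisim (Trans env) (Proc.hide P1 L) (Proc.hide P2 L) := by
  obtain ⟨B, hB, hP⟩ := h
  exact ⟨_, hB.map_hide L, P1, P2, hP, rfl, rfl⟩

/-- branching bisimilarity is a congruence w.r.t. hiding. -/
theorem brBisim_congr_hide {A C : Type} (env : C → Proc A C)
    (hguard : ∀ c, Guarded (env c)) (P1 P2 : Proc A C)
    (h : BrBisim (Trans env) P1 P2) (L : Set A) :
    BrBisim (Trans env) (Proc.hide P1 L) (Proc.hide P2 L) :=
  brBisim_congr_hide_general env P1 P2 h L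

end SecurityNI
end

section
/- If P1 ≈_b P2, then P1 ∥_L P ≈_b P2 ∥_L P and P ∥_L P1 ≈_b P ∥_L P2 for every set L ⊆ A of observable actions and every process P (branching bisimilarity is a congruence with respect to the CSP-style parallel composition operator). -/
namespace SecurityNI

variable {A C : Type}

private lemma tauStar_parL {A C : Type} (env : C → Proc A C) {L : Set A} {p p' : Proc A C}
    (q : Proc A C) (h : TauStar (Trans env) p p') :
    TauStar (Trans env) (Proc.par L p q) (Proc.par L p' q) :=
  Relation.ReflTransGen.lift (r := fun s s' => Trans env s none s')
      (p := fun s s' => Trans env s none s') (fun r => Proc.par L r q)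
    (fun _ _ h => Trans.parL h (fun _ hx => nomatch hx)) _ _ h

private lemma tauStar_parR {A C : Type} (env : C → Proc A C) {L : Set A} {p p' : Proc A C}
    (q : Proc A C) (h : TauStar (Trans env) p p') :
    TauStar (Trans env) (Proc.par L q p) (Proc.par L q p') :=
  Relation.ReflTransGen.lift (r := fun s s' => Trans env s none s')
      (p := fun s s' => Trans env s none s') (fun r => Proc.par L q r)
    (fun _ _ h => Trans.parR h (fun _ hx => nomatch hx)) _ _ h

private lemma brBisim_congr_parL {A C : Type} (env : C → Proc A C) {P1 P2 : Proc A C}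
    (h : BrBisim (Trans env) P1 P2) (L : Set A) (P : Proc A C) :
    BrBisim (Trans env) (Proc.par L P1 P) (Proc.par L P2 P) := by
  obtain ⟨B, ⟨hsym, hstep⟩, hB⟩ := h
  refine ⟨fun u v => ∃ p p' q, B p p' ∧ u = Proc.par L p q ∧ v = Proc.par L p' q,
    ⟨?_, ?_⟩, ⟨P1, P2, P, hB, rfl, rfl⟩⟩
  · rintro u v ⟨p, p', q, hb, rfl, rfl⟩
    exact ⟨p', p, q, hsym hb, rfl, rfl⟩
  · rintro u v ⟨p, p', q, hb, rfl, rfl⟩ a u' htr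
    cases htr with
    | parL h hn =>
      rename_i p0
      rcases hstep _ _ hb _ _ h with ⟨rfl, hb'⟩ | ⟨pb, p2, hts, htr2, hb1, hb2⟩
      · exact Or.inl ⟨rfl, p0, p', q, hb', rfl, rfl⟩
      · exact Or.inr ⟨Proc.par L pb q, Proc.par L p2 q, tauStar_parL env q hts,
          Trans.parL htr2 hn, ⟨p, pb, q, hb1, rfl, rfl⟩, ⟨p0, p2, q, hb2, rfl, rfl⟩⟩
    | parR h hn =>
      rename_i q0
      exact Or.inr ⟨Proc.par L p' q, Proc.par L p' q0, Relation.ReflTransGen.refl,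
        Trans.parR h hn, ⟨p, p', q, hb, rfl, rfl⟩, ⟨p, p', q0, hb, rfl, rfl⟩⟩
    | sync h1 h2 hx =>
      rename_i x p0 q0
      rcases hstep _ _ hb _ _ h1 with ⟨heq, _⟩ | ⟨pb, p2, hts, htr2, hb1, hb2⟩
      · exact absurd heq (by simp)
      · exact Or.inr ⟨Proc.par L pb q, Proc.par L p2 q0, tauStar_parL env q hts,
          Trans.sync htr2 h2 hx, ⟨p, pb, q, hb1, rfl, rfl⟩, ⟨p0, p2, q0, hb2, rfl, rfl⟩⟩

private lemma brBisim_congr_parR {A C : Type} (env : C → Proc A C) {P1 P2 : Proc A C}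
    (h : BrBisim (Trans env) P1 P2) (L : Set A) (P : Proc A C) :
    BrBisim (Trans env) (Proc.par L P P1) (Proc.par L P P2) := by
  obtain ⟨B, ⟨hsym, hstep⟩, hB⟩ := h
  refine ⟨fun u v => ∃ q p p', B p p' ∧ u = Proc.par L q p ∧ v = Proc.par L q p',
    ⟨?_, ?_⟩, ⟨P, P1, P2, hB, rfl, rfl⟩⟩
  · rintro u v ⟨q, p, p', hb, rfl, rfl⟩
    exact ⟨q, p', p, hsym hb, rfl, rfl⟩
  · rintro u v ⟨q, p, p', hb, rfl, rfl⟩ a u' htr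
    cases htr with
    | parL h hn =>
      rename_i q0
      exact Or.inr ⟨Proc.par L q p', Proc.par L q0 p', Relation.ReflTransGen.refl,
        Trans.parL h hn, ⟨q, p, p', hb, rfl, rfl⟩, ⟨q0, p, p', hb, rfl, rfl⟩⟩
    | parR h hn =>
      rename_i p0
      rcases hstep _ _ hb _ _ h with ⟨rfl, hb'⟩ | ⟨pb, p2, hts, htr2, hb1, hb2⟩
      · exact Or.inl ⟨rfl, q, p0, p', hb', rfl, rfl⟩
      · exact Or.inr ⟨Proc.par L q pb, Proc.par L q p2, tauStar_parR env q hts,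
          Trans.parR htr2 hn, ⟨q, p, pb, hb1, rfl, rfl⟩, ⟨q, p0, p2, hb2, rfl, rfl⟩⟩
    | sync h1 h2 hx =>
      rename_i x q0 p0
      rcases hstep _ _ hb _ _ h2 with ⟨heq, _⟩ | ⟨pb, p2, hts, htr2, hb1, hb2⟩
      · exact absurd heq (by simp)
      · exact Or.inr ⟨Proc.par L q pb, Proc.par L q0 p2, tauStar_parR env q hts,
          Trans.sync h1 htr2 hx, ⟨q, p, pb, hb1, rfl, rfl⟩, ⟨q0, p0, p2, hb2, rfl, rfl⟩⟩

/-- branching bisimilarity is a congruence w.r.t. CSP-style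
parallel composition, on both sides. -/
theorem brBisim_congr_par {A C : Type} (env : C → Proc A C)
    (hguard : ∀ c, Guarded (env c)) (P1 P2 : Proc A C)
    (h : BrBisim (Trans env) P1 P2) (L : Set A) (P : Proc A C) :
    BrBisim (Trans env) (Proc.par L P1 P) (Proc.par L P2 P) ∧
    BrBisim (Trans env) (Proc.par L P P1) (Proc.par L P P2) :=
  ⟨brBisim_congr_parL env h L P, brBisim_congr_parR env h L P⟩

end SecurityNI
end

section
/- If P ∈ SBrSNNI and L ⊆ A, then (Q/A_H)∖L ≈_b (R∖L)/A_H for all Q, R ∈ reach(P) such that Q/A_H ≈_b R∖A_H. -/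
namespace SecurityNI

variable {A C : Type}

/-! ### Auxiliary development: branching bisimilarity is transitive (Basten's argument) -/

section BastenAux

variable {A S : Type} {tr : S → Option A → S → Prop}

/-- Semi-branching bisimulation. -/
def IsSB (tr : S → Option A → S → Prop) (B : S → S → Prop) : Prop :=
  Symmetric B ∧ ∀ s1 s2, B s1 s2 → ∀ a s1', tr s1 a s1' →
    (a = none ∧ ∃ s2b, TauStar tr s2 s2b ∧ B s1 s2b ∧ B s1' s2b) ∨
    (∃ s2b s2', TauStar tr s2 s2b ∧ tr s2b a s2' ∧ B s1 s2b ∧ B s1' s2')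

/-- Semi-branching bisimilarity. -/
def SB (tr : S → Option A → S → Prop) (s t : S) : Prop := ∃ B, IsSB tr B ∧ B s t

theorem IsBranchingBisim.isSB {B : S → S → Prop} (h : IsBranchingBisim tr B) :
    IsSB tr B := by
  refine ⟨h.1, fun s1 s2 hB a s1' hstep => ?_⟩
  rcases h.2 s1 s2 hB a s1' hstep with ⟨rfl, h'⟩ | ⟨s2b, s2', h1, h2, h3, h4⟩
  · exact Or.inl ⟨rfl, s2, Relation.ReflTransGen.refl, hB, h'⟩
  · exact Or.inr ⟨s2b, s2', h1, h2, h3, h4⟩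

theorem IsSB.tauStar {B : S → S → Prop} (hB : IsSB tr B) {s s' : S}
    (h : TauStar tr s s') :
    ∀ t, B s t → ∃ t', TauStar tr t t' ∧ B s' t' := by
  have h' : Relation.ReflTransGen (fun s s' => tr s none s') s s' := h
  clear h
  induction h' using Relation.ReflTransGen.head_induction_on with
  | refl => exact fun t hst => ⟨t, Relation.ReflTransGen.refl, hst⟩
  | head hab _ ih =>
    intro t hst
    rcases hB.2 _ _ hst none _ hab with ⟨_, s2b, hts, _, hb⟩ | ⟨s2b, s2', h1, h2, _, h4⟩
    · obtain ⟨t', ht', hB'⟩ := ih s2b hb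
      exact ⟨t', Relation.ReflTransGen.trans hts ht', hB'⟩
    · obtain ⟨t', ht', hB'⟩ := ih s2' h4
      exact ⟨t', Relation.ReflTransGen.trans (Relation.ReflTransGen.tail h1 h2) ht', hB'⟩

theorem IsSB.comp_aux {B1 B2 C : S → S → Prop} (h1 : IsSB tr B1) (h2 : IsSB tr B2)
    (hC : ∀ s t u, B1 s t → B2 t u → C s u) {s t u : S} (hst : B1 s t) (htu : B2 t u)
    {a : Option A} {s' : S} (hstep : tr s a s') :
    (a = none ∧ ∃ ub, TauStar tr u ub ∧ C s ub ∧ C s' ub) ∨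
    (∃ ub u', TauStar tr u ub ∧ tr ub a u' ∧ C s ub ∧ C s' u') := by
  rcases h1.2 _ _ hst a _ hstep with ⟨rfl, tb, htb, hstb, hs'tb⟩ |
    ⟨tb, t', htb, hstep', hstb, hs't'⟩
  · obtain ⟨ub, hub, htbub⟩ := h2.tauStar htb u htu
    exact Or.inl ⟨rfl, ub, hub, hC _ _ _ hstb htbub, hC _ _ _ hs'tb htbub⟩
  · obtain ⟨ub, hub, htbub⟩ := h2.tauStar htb u htu
    rcases h2.2 _ _ htbub a _ hstep' with ⟨rfl, uc, huc, h5, h6⟩ |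
      ⟨uc, u', huc, hstep'', h5, h6⟩
    · exact Or.inl ⟨rfl, uc, Relation.ReflTransGen.trans hub huc,
        hC _ _ _ hstb h5, hC _ _ _ hs't' h6⟩
    · exact Or.inr ⟨uc, u', Relation.ReflTransGen.trans hub huc, hstep'',
        hC _ _ _ hstb h5, hC _ _ _ hs't' h6⟩

theorem sb_refl (s : S) : SB tr s s := by
  refine ⟨Eq, ⟨fun _ _ h => h.symm, ?_⟩, rfl⟩
  intro s1 s2 h a s1' hstep
  subst h
  exact Or.inr ⟨s1, s1', Relation.ReflTransGen.refl, hstep, rfl, rfl⟩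

theorem sb_symm {s t : S} (h : SB tr s t) : SB tr t s := by
  obtain ⟨B, hB, hb⟩ := h
  exact ⟨B, hB, hB.1 hb⟩

theorem sb_trans {s t u : S} (h1 : SB tr s t) (h2 : SB tr t u) : SB tr s u := by
  obtain ⟨B1, hB1, hst⟩ := h1
  obtain ⟨B2, hB2, htu⟩ := h2
  refine ⟨fun s u => (∃ t, B1 s t ∧ B2 t u) ∨ (∃ t, B2 s t ∧ B1 t u),
    ⟨?_, ?_⟩, Or.inl ⟨t, hst, htu⟩⟩
  · rintro x y (⟨t, ha, hb⟩ | ⟨t, ha, hb⟩)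
    · exact Or.inr ⟨t, hB2.1 hb, hB1.1 ha⟩
    · exact Or.inl ⟨t, hB1.1 hb, hB2.1 ha⟩
  · rintro s1 s2 (⟨t, ha, hb⟩ | ⟨t, ha, hb⟩) a s1' hstep
    · exact IsSB.comp_aux (C := fun s u => (∃ t, B1 s t ∧ B2 t u) ∨ ∃ t, B2 s t ∧ B1 t u) hB1 hB2 (fun s t u hx hy => Or.inl ⟨t, hx, hy⟩) ha hb hstep
    · exact IsSB.comp_aux (C := fun s u => (∃ t, B1 s t ∧ B2 t u) ∨ ∃ t, B2 s t ∧ B1 t u) hB2 hB1 (fun s t u hx hy => Or.inr ⟨t, hx, hy⟩) ha hb hstep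

theorem isSB_SB : IsSB tr (SB tr) := by
  constructor
  · intro x y h; exact sb_symm h
  · rintro s1 s2 ⟨B, hB, h⟩ a s1' hstep
    rcases hB.2 _ _ h a _ hstep with ⟨rfl, s2b, h1, h2, h3⟩ | ⟨s2b, s2', h1, h2, h3, h4⟩
    · exact Or.inl ⟨rfl, s2b, h1, ⟨B, hB, h2⟩, ⟨B, hB, h3⟩⟩
    · exact Or.inr ⟨s2b, s2', h1, h2, ⟨B, hB, h3⟩, ⟨B, hB, h4⟩⟩

/-- The stuttering lemma for semi-branching bisimilarity. -/
theorem sb_stutter {t u t' : S} (h1 : TauStar tr t u) (h2 : TauStar tr u t')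
    (h3 : SB tr t t') : SB tr t u := by
  refine ⟨fun x y =>
      SB tr x y ∨ (TauStar tr t x ∧ TauStar tr x t' ∧ SB tr t y) ∨
        (TauStar tr t y ∧ TauStar tr y t' ∧ SB tr t x),
    ⟨?_, ?_⟩, Or.inr (Or.inr ⟨h1, h2, sb_refl t⟩)⟩
  · rintro x y (h | h | h)
    · exact Or.inl (sb_symm h)
    · exact Or.inr (Or.inr h)
    · exact Or.inr (Or.inl h)
  · rintro x y (hxy | ⟨hx1, hx2, hty⟩ | ⟨hy1, hy2, htx⟩) a x' hstep
    · -- x SB y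
      rcases isSB_SB.2 _ _ hxy a _ hstep with ⟨rfl, yb, ha, hb, hc⟩ |
        ⟨yb, y', ha, hb, hc, hd⟩
      · exact Or.inl ⟨rfl, yb, ha, Or.inl hb, Or.inl hc⟩
      · exact Or.inr ⟨yb, y', ha, hb, Or.inl hc, Or.inl hd⟩
    · -- x is an intermediate state, SB t y
      obtain ⟨yb, hyb, hxyb⟩ := isSB_SB.tauStar hx1 y hty
      rcases isSB_SB.2 _ _ hxyb a _ hstep with ⟨rfl, yc, ha, hb, hc⟩ |
        ⟨yc, y', ha, hb, hc, hd⟩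
      · exact Or.inl ⟨rfl, yc, Relation.ReflTransGen.trans hyb ha, Or.inl hb, Or.inl hc⟩
      · exact Or.inr ⟨yc, y', Relation.ReflTransGen.trans hyb ha, hb, Or.inl hc, Or.inl hd⟩
    · -- y is an intermediate state, SB t x
      -- transfer the step of x to t, then from t' (reachable from y), then lift to y
      rcases isSB_SB.2 _ _ (sb_symm htx) a _ hstep with ⟨rfl, tb, ha, hb, hc⟩ |
        ⟨tb, t2, ha, hb, hc, hd⟩
      · -- stutter at t: t ⟹ tb, x SB tb, x' SB tb
        obtain ⟨w, hw, htbw⟩ := isSB_SB.tauStar ha t' h3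
        refine Or.inl ⟨rfl, w, Relation.ReflTransGen.trans hy2 hw,
          Or.inl (sb_trans hb htbw), Or.inl (sb_trans hc htbw)⟩
      · -- t ⟹ tb --a→ t2, x SB tb, x' SB t2
        obtain ⟨w, hw, htbw⟩ := isSB_SB.tauStar ha t' h3
        rcases isSB_SB.2 _ _ htbw a _ hb with ⟨rfl, wb, ha', hb', hc'⟩ |
          ⟨wb, w', ha', hb', hc', hd'⟩
        · exact Or.inl ⟨rfl, wb,
            Relation.ReflTransGen.trans hy2 (Relation.ReflTransGen.trans hw ha'),
            Or.inl (sb_trans hc hb'), Or.inl (sb_trans hd hc')⟩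
        · exact Or.inr ⟨wb, w',
            Relation.ReflTransGen.trans hy2 (Relation.ReflTransGen.trans hw ha'),
            hb', Or.inl (sb_trans hc hc'), Or.inl (sb_trans hd hd')⟩

theorem isBranching_SB : IsBranchingBisim tr (SB tr) := by
  refine ⟨fun _ _ h => sb_symm h, ?_⟩
  intro s1 s2 h a s1' hstep
  rcases isSB_SB.2 _ _ h a _ hstep with ⟨rfl, s2b, hts, hx1, hx2⟩ |
    ⟨s2b, s2', hts, hstep', hx1, hx2⟩
  · rcases Relation.ReflTransGen.cases_tail hts with heq | ⟨u, hu, hstep''⟩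
    · subst heq
      exact Or.inl ⟨rfl, hx2⟩
    · have hs2s2b : SB tr s2 s2b := sb_trans (sb_symm h) hx1
      have hu' : SB tr s2 u :=
        sb_stutter hu (Relation.ReflTransGen.single hstep'') hs2s2b
      exact Or.inr ⟨u, s2b, hu, hstep'', sb_trans h hu', hx2⟩
  · exact Or.inr ⟨s2b, s2', hts, hstep', hx1, hx2⟩

theorem brBisim_iff_sb {s t : S} : BrBisim tr s t ↔ SB tr s t := by
  constructor
  · rintro ⟨B, hB, hb⟩
    exact ⟨B, hB.isSB, hb⟩
  · intro h
    exact ⟨SB tr, isBranching_SB, h⟩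

theorem brBisim_symm {s t : S} (h : BrBisim tr s t) : BrBisim tr t s := by
  obtain ⟨B, hB, hb⟩ := h
  exact ⟨B, hB, hB.1 hb⟩

theorem brBisim_trans {s t u : S} (h1 : BrBisim tr s t) (h2 : BrBisim tr t u) :
    BrBisim tr s u :=
  brBisim_iff_sb.2 (sb_trans (brBisim_iff_sb.1 h1) (brBisim_iff_sb.1 h2))

theorem BrBisim.step {s1 s2 : S} {a : Option A} {s1' : S} (h : BrBisim tr s1 s2)
    (hstep : tr s1 a s1') :
    (a = none ∧ BrBisim tr s1' s2) ∨
    ∃ s2b s2', TauStar tr s2 s2b ∧ tr s2b a s2' ∧ BrBisim tr s1 s2b ∧ BrBisim tr s1' s2' := by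
  obtain ⟨B, hB, hb⟩ := h
  rcases hB.2 _ _ hb a _ hstep with ⟨rfl, h'⟩ | ⟨s2b, s2', h1, h2, h3, h4⟩
  · exact Or.inl ⟨rfl, ⟨B, hB, h'⟩⟩
  · exact Or.inr ⟨s2b, s2', h1, h2, ⟨B, hB, h3⟩, ⟨B, hB, h4⟩⟩

end BastenAux

/-! ### Structural lemmas about restriction and hiding -/

section ProcAux

variable {A C : Type} {env : C → Proc A C}

theorem trans_restrict_inv {p : Proc A C} {S : Set A} {a : Option A} {z : Proc A C}
    (h : Trans env (.restrict p S) a z) :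
    ∃ p', z = .restrict p' S ∧ Trans env p a p' ∧ ∀ x, a = some x → x ∉ S := by
  cases h with
  | res h hn => exact ⟨_, rfl, h, hn⟩

theorem trans_hide_inv {p : Proc A C} {S : Set A} {a : Option A} {z : Proc A C}
    (h : Trans env (.hide p S) a z) :
    ∃ p', z = .hide p' S ∧
      ((a = none ∧ ∃ x ∈ S, Trans env p (some x) p') ∨
       (Trans env p a p' ∧ ∀ x, a = some x → x ∉ S)) := by
  cases h with
  | hideIn h hx => exact ⟨_, rfl, Or.inl ⟨rfl, _, hx, h⟩⟩
  | hideOut h hn => exact ⟨_, rfl, Or.inr ⟨h, hn⟩⟩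

theorem tauStar_restrict_inv {s z : Proc A C} (h : TauStar (Trans env) s z) :
    ∀ p S, s = .restrict p S → ∃ q, z = .restrict q S ∧ TauStar (Trans env) p q := by
  have h' : Relation.ReflTransGen (fun s s' => Trans env s none s') s z := h
  clear h
  induction h' using Relation.ReflTransGen.head_induction_on with
  | refl => exact fun p S hs => ⟨p, hs, Relation.ReflTransGen.refl⟩
  | head hab _ ih =>
    rintro p S rfl
    obtain ⟨p', rfl, hstep, -⟩ := trans_restrict_inv hab
    obtain ⟨q, rfl, hq⟩ := ih p' S rfl
    exact ⟨q, rfl, Relation.ReflTransGen.head hstep hq⟩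

theorem tauStar_hide_reach {s z : Proc A C} (h : TauStar (Trans env) s z) :
    ∀ p S, s = .hide p S → ∃ q, z = .hide q S ∧ Reach (Trans env) p q := by
  have h' : Relation.ReflTransGen (fun s s' => Trans env s none s') s z := h
  clear h
  induction h' using Relation.ReflTransGen.head_induction_on with
  | refl => exact fun p S hs => ⟨p, hs, Relation.ReflTransGen.refl⟩
  | head hab _ ih =>
    rintro p S rfl
    obtain ⟨p', rfl, hcase⟩ := trans_hide_inv hab
    obtain ⟨q, rfl, hq⟩ := ih p' S rfl
    rcases hcase with ⟨_, x, _, hst⟩ | ⟨hst, _⟩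
    · exact ⟨q, rfl, Relation.ReflTransGen.head ⟨some x, hst⟩ hq⟩
    · exact ⟨q, rfl, Relation.ReflTransGen.head ⟨none, hst⟩ hq⟩

theorem tauStar_restrict_lift {S : Set A} {s s' : Proc A C}
    (h : TauStar (Trans env) s s') :
    TauStar (Trans env) (.restrict s S) (.restrict s' S) :=
  Relation.ReflTransGen.lift (fun x => Proc.restrict x S)
    (fun _ _ hstep => Trans.res hstep (fun x hx => by cases hx)) _ _ h

theorem tauStar_RL_lift {L S : Set A} {r r' : Proc A C}
    (h : TauStar (Trans env) r r') :
    TauStar (Trans env) (.hide (.restrict r L) S) (.hide (.restrict r' L) S) :=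
  Relation.ReflTransGen.lift (fun x => Proc.hide (Proc.restrict x L) S)
    (fun _ _ hstep => Trans.hideOut (Trans.res hstep (fun x hx => by cases hx))
      (fun x hx => by cases hx)) _ _ h

theorem reach_of_tauStar {s s' : Proc A C} (h : TauStar (Trans env) s s') :
    Reach (Trans env) s s' :=
  Relation.ReflTransGen.mono (fun _ _ h => ⟨none, h⟩) _ _ h

end ProcAux

/-- Lemma 4.3(2). -/
theorem sbrsnni_hide_restrict_swap {A C : Type} (env : C → Proc A C)
    (hguard : ∀ c, Guarded (env c)) (AH : Set A) (P : Proc A C)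
    (hP : SBrSNNI env AH P) (L : Set A) :
    ∀ Q R : Proc A C,
      Reach (Trans env) P Q → Reach (Trans env) P R →
      BrBisim (Trans env) (Proc.hide Q AH) (Proc.restrict R AH) →
      BrBisim (Trans env) (Proc.restrict (Proc.hide Q AH) L)
        (Proc.hide (Proc.restrict R L) AH) := by
  intro Q0 R0 hQ0 hR0 hbis0
  refine ⟨fun s t =>
      (∃ Q R, Reach (Trans env) P Q ∧ Reach (Trans env) P R ∧
        BrBisim (Trans env) (Proc.hide Q AH) (Proc.restrict R AH) ∧
        s = Proc.restrict (Proc.hide Q AH) L ∧ t = Proc.hide (Proc.restrict R L) AH) ∨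
      (∃ Q R, Reach (Trans env) P Q ∧ Reach (Trans env) P R ∧
        BrBisim (Trans env) (Proc.hide Q AH) (Proc.restrict R AH) ∧
        t = Proc.restrict (Proc.hide Q AH) L ∧ s = Proc.hide (Proc.restrict R L) AH),
    ⟨?_, ?_⟩, Or.inl ⟨Q0, R0, hQ0, hR0, hbis0, rfl, rfl⟩⟩
  · rintro x y (⟨Q, R, h1, h2, h3, rfl, rfl⟩ | ⟨Q, R, h1, h2, h3, rfl, rfl⟩)
    · exact Or.inr ⟨Q, R, h1, h2, h3, rfl, rfl⟩
    · exact Or.inl ⟨Q, R, h1, h2, h3, rfl, rfl⟩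
  · rintro s1 s2 (⟨Q, R, hQ, hR, hQR, rfl, rfl⟩ | ⟨Q, R, hQ, hR, hQR, rfl, rfl⟩) a s1' hstep
    · -- s1 = (Q/AH)∖L, s2 = (R∖L)/AH
      obtain ⟨Y, rfl, hY, hnL⟩ := trans_restrict_inv hstep
      obtain ⟨Q', rfl, hcase⟩ := trans_hide_inv hY
      have hQ' : Reach (Trans env) P Q' := by
        rcases hcase with ⟨_, x, _, hst⟩ | ⟨hst, _⟩
        · exact Relation.ReflTransGen.tail hQ ⟨some x, hst⟩
        · exact Relation.ReflTransGen.tail hQ ⟨a, hst⟩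
      rcases hQR.step hY with ⟨rfl, hb'⟩ | ⟨Zb, Z', hts, hstep2, hb1, hb2⟩
      · exact Or.inl ⟨rfl, Or.inl ⟨Q', R, hQ', hR, hb', rfl, rfl⟩⟩
      · obtain ⟨Rb, rfl, htsR⟩ := tauStar_restrict_inv hts R AH rfl
        obtain ⟨R', rfl, hstR, hnAH⟩ := trans_restrict_inv hstep2
        have hRb : Reach (Trans env) P Rb :=
          Relation.ReflTransGen.trans hR (reach_of_tauStar htsR)
        have hR' : Reach (Trans env) P R' := Relation.ReflTransGen.tail hRb ⟨a, hstR⟩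
        exact Or.inr ⟨Proc.hide (Proc.restrict Rb L) AH, Proc.hide (Proc.restrict R' L) AH,
          tauStar_RL_lift htsR, Trans.hideOut (Trans.res hstR hnL) hnAH,
          Or.inl ⟨Q, Rb, hQ, hRb, hb1, rfl, rfl⟩,
          Or.inl ⟨Q', R', hQ', hR', hb2, rfl, rfl⟩⟩
    · -- s1 = (R∖L)/AH, s2 = (Q/AH)∖L
      obtain ⟨Y, rfl, hcase⟩ := trans_hide_inv hstep
      rcases hcase with ⟨rfl, h, hin, hYtrans⟩ | ⟨hYtrans, hnAH⟩
      · -- high action case: R --h→ R' with h ∈ AH, hidden into τ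
        obtain ⟨R', rfl, hstR, hnL⟩ := trans_restrict_inv hYtrans
        have hR' : Reach (Trans env) P R' := Relation.ReflTransGen.tail hR ⟨some h, hstR⟩
        have hSNR : BrBisim (Trans env) (Proc.restrict R AH) (Proc.hide R AH) := hP R hR
        have hSNR' : BrBisim (Trans env) (Proc.restrict R' AH) (Proc.hide R' AH) := hP R' hR'
        have hQRh : BrBisim (Trans env) (Proc.hide Q AH) (Proc.hide R AH) :=
          brBisim_trans hQR hSNR
        have hstepH : Trans env (Proc.hide R AH) none (Proc.hide R' AH) :=
          Trans.hideIn hstR hin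
        rcases (brBisim_symm hQRh).step hstepH with ⟨_, hb'⟩ | ⟨Zb, Z', hts, hstep2, hb1, hb2⟩
        · -- stutter: (R'/AH) ≈ (Q/AH)
          have hgoal : BrBisim (Trans env) (Proc.hide Q AH) (Proc.restrict R' AH) :=
            brBisim_trans (brBisim_symm hb') (brBisim_symm hSNR')
          exact Or.inl ⟨rfl, Or.inr ⟨Q, R', hQ, hR', hgoal, rfl, rfl⟩⟩
        · obtain ⟨Qb, rfl, hreachQb⟩ := tauStar_hide_reach hts Q AH rfl
          obtain ⟨Q', rfl, hcase'⟩ := trans_hide_inv hstep2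
          have hQb : Reach (Trans env) P Qb := Relation.ReflTransGen.trans hQ hreachQb
          have hQ' : Reach (Trans env) P Q' := by
            rcases hcase' with ⟨_, x, _, hst⟩ | ⟨hst, _⟩
            · exact Relation.ReflTransGen.tail hQb ⟨some x, hst⟩
            · exact Relation.ReflTransGen.tail hQb ⟨none, hst⟩
          have hbQb : BrBisim (Trans env) (Proc.hide Qb AH) (Proc.restrict R AH) :=
            brBisim_trans (brBisim_symm hb1) (brBisim_symm hSNR)
          have hbQ' : BrBisim (Trans env) (Proc.hide Q' AH) (Proc.restrict R' AH) :=
            brBisim_trans (brBisim_symm hb2) (brBisim_symm hSNR')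
          exact Or.inr ⟨Proc.restrict (Proc.hide Qb AH) L, Proc.restrict (Proc.hide Q' AH) L,
            tauStar_restrict_lift hts,
            Trans.res hstep2 (fun x hx => by cases hx),
            Or.inr ⟨Qb, R, hQb, hR, hbQb, rfl, rfl⟩,
            Or.inr ⟨Q', R', hQ', hR', hbQ', rfl, rfl⟩⟩
      · -- low or silent action case
        obtain ⟨R', rfl, hstR, hnL⟩ := trans_restrict_inv hYtrans
        have hR' : Reach (Trans env) P R' := Relation.ReflTransGen.tail hR ⟨a, hstR⟩
        have hstepRA : Trans env (Proc.restrict R AH) a (Proc.restrict R' AH) :=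
          Trans.res hstR hnAH
        rcases (brBisim_symm hQR).step hstepRA with ⟨rfl, hb'⟩ | ⟨Zb, Z', hts, hstep2, hb1, hb2⟩
        · exact Or.inl ⟨rfl, Or.inr ⟨Q, R', hQ, hR', brBisim_symm hb', rfl, rfl⟩⟩
        · obtain ⟨Qb, rfl, hreachQb⟩ := tauStar_hide_reach hts Q AH rfl
          obtain ⟨Q', rfl, hcase'⟩ := trans_hide_inv hstep2
          have hQb : Reach (Trans env) P Qb := Relation.ReflTransGen.trans hQ hreachQb
          have hQ' : Reach (Trans env) P Q' := by
            rcases hcase' with ⟨_, x, _, hst⟩ | ⟨hst, _⟩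
            · exact Relation.ReflTransGen.tail hQb ⟨some x, hst⟩
            · exact Relation.ReflTransGen.tail hQb ⟨a, hst⟩
          exact Or.inr ⟨Proc.restrict (Proc.hide Qb AH) L, Proc.restrict (Proc.hide Q' AH) L,
            tauStar_restrict_lift hts, Trans.res hstep2 hnL,
            Or.inr ⟨Qb, R, hQb, hR, brBisim_symm hb1, rfl, rfl⟩,
            Or.inr ⟨Q', R', hQ', hR', brBisim_symm hb2, rfl, rfl⟩⟩

end SecurityNI
end
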